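/- Sinusoidal approximation remainder bound (equations (14)–(15)). Fix t ∈ ℝ. Let x ∈ 𝓑_{ε1,ε2} and let g be a window function, and let σ(t) > 0. Then for every η ∈ ℝ, the adaptive STFT satisfies Ṽ_x(t,η) = Σ_{k=0}^K x_k(t) ĝ(σ(t)(η − φ'_k(t))) + rem_0(t,η), where the remainder rem_0(t,η) := Σ_{k=0}^K ∫_ℝ [x_k(t+τ) − x_k(t)e^{2πi φ'_k(t)τ}] (1/σ(t)) g(τ/σ(t)) e^{−2πiητ} dτ satisfies |rem_0(t,η)| ≤ M(t)(ε1 I_1 σ(t) + π ε2 I_2 σ(t)²) = M(t)λ_0(t). -/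

import Mathlib

/-!
Write each component near `t` as its linearization `x_k(t) e^{2πi φ'_k(t) τ}` plus a remainder.
Against the dilated window the linearization transforms exactly into
`x_k(t) ĝ(σ(t)(η - φ'_k(t)))`. For the remainder, the amplitude condition bounds the change of
`A_k` by `ε1 |τ| A_k(t)`, while Taylor's theorem bounds the phase error by `ε2 τ² / 2` and
`θ ↦ e^{iθ}` is 1-Lipschitz; so the remainder integrand is at most
`A_k(t) (ε1 |τ| + π ε2 τ²)` times the window, and the dilation turns `∫ |τ|ⁿ |g(τ/σ)|/σ` into
`σⁿ Iₙ`.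
-/

open MeasureTheory Real

noncomputable section

/-- The adaptive short-time Fourier transform with time-varying window width `σ`. -/
def aSTFT (x : ℝ → ℂ) (g : ℝ → ℝ) (σ : ℝ → ℝ) (t η : ℝ) : ℂ :=
  ∫ τ : ℝ, x (t + τ) * (((σ t)⁻¹ * g (τ / σ t) : ℝ) : ℂ) *
    Complex.exp (-(2 * (π : ℂ) * η * τ) * Complex.I)

/-- The Fourier transform `ĝ` of the window `g`. -/
def hatg (g : ℝ → ℝ) (ξ : ℝ) : ℂ :=
  ∫ τ : ℝ, (g τ : ℂ) * Complex.exp (-(2 * (π : ℂ) * ξ * τ) * Complex.I)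

/-- The absolute moments `I_n = ∫ |τ^n g(τ)| dτ` of the window. -/
def momentI (g : ℝ → ℝ) (n : ℕ) : ℝ := ∫ τ : ℝ, |τ| ^ n * |g τ|

/-- The `k`-th component `x_k(s) = A_k(s) e^{2πi φ_k(s)}`. -/
def xcomp (A φ : ℕ → ℝ → ℝ) (k : ℕ) (s : ℝ) : ℂ :=
  (A k s : ℂ) * Complex.exp ((2 * (π : ℂ) * φ k s) * Complex.I)

/-- `M(t) = Σ_{k=0}^K A_k(t)`. -/
def Msum (K : ℕ) (A : ℕ → ℝ → ℝ) (t : ℝ) : ℝ := ∑ k ∈ Finset.range (K + 1), A k t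

/-- `μ(t) = min_{0 ≤ k ≤ K} A_k(t)`. -/
def muMin (K : ℕ) (A : ℕ → ℝ → ℝ) (t : ℝ) : ℝ :=
  (Finset.range (K + 1)).inf' (by simp) fun k => A k t

/-- `λ_0(t) = ε1 I_1 σ(t) + π ε2 I_2 σ(t)²`. -/
def lam0 (g : ℝ → ℝ) (σ : ℝ → ℝ) (ε1 ε2 t : ℝ) : ℝ :=
  ε1 * momentI g 1 * σ t + π * ε2 * momentI g 2 * σ t ^ 2

/-- `err_ℓ(t) = M(t)λ_0(t) + Σ_{k≠ℓ} A_k(t) |ĝ(α(2|ℓ−k|−1))|`. -/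
def errl (K : ℕ) (A : ℕ → ℝ → ℝ) (g : ℝ → ℝ) (σ : ℝ → ℝ) (α ε1 ε2 : ℝ)
    (l : ℕ) (t : ℝ) : ℝ :=
  Msum K A t * lam0 g σ ε1 ε2 t +
    ∑ k ∈ (Finset.range (K + 1)).erase l,
      A k t * ‖hatg g (α * (2 * |(l : ℝ) - (k : ℝ)| - 1))‖

/-- `𝓖_t = {η : |Ṽ_x(t,η)| > ε̃1}`. -/
def Gt (x : ℝ → ℂ) (g : ℝ → ℝ) (σ : ℝ → ℝ) (t eps : ℝ) : Set ℝ :=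
  {η | eps < ‖aSTFT x g σ t η‖}

/-- `𝓖_{t,k} = {η ∈ 𝓖_t : |η − φ'_k(t)| < α/σ(t)}`. -/
def Gtk (x : ℝ → ℂ) (g : ℝ → ℝ) (σ : ℝ → ℝ) (φ : ℕ → ℝ → ℝ) (α t eps : ℝ)
    (k : ℕ) : Set ℝ :=
  {η | η ∈ Gt x g σ t eps ∧ |η - deriv (φ k) t| < α / σ t}


theorem Complex.norm_exp_ofReal_mul_I_sub_exp_ofReal_mul_I_le (a b : ℝ) :
    ‖Complex.exp (a * Complex.I) - Complex.exp (b * Complex.I)‖ ≤ |a - b| := by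
  have h : Complex.exp (a * Complex.I) - Complex.exp (b * Complex.I) =
      Complex.exp (b * Complex.I) * (Complex.exp (Complex.I * ↑(a - b)) - 1) := by
    rw [mul_sub, ← Complex.exp_add]; push_cast; ring_nf
  rw [h, norm_mul, Complex.norm_exp_ofReal_mul_I, one_mul, ← Real.norm_eq_abs]
  exact Real.norm_exp_I_mul_ofReal_sub_one_le

theorem Complex.norm_ofReal_mul_exp_sub_ofReal_mul_exp_le {a b α β : ℝ} (hb : 0 ≤ b) :
    ‖(a : ℂ) * Complex.exp (α * Complex.I) - b * Complex.exp (β * Complex.I)‖ ≤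
      |a - b| + b * |α - β| := by
  have h : (a : ℂ) * Complex.exp (α * Complex.I) - b * Complex.exp (β * Complex.I) =
      ((a - b : ℝ) : ℂ) * Complex.exp (α * Complex.I) +
        b * (Complex.exp (α * Complex.I) - Complex.exp (β * Complex.I)) := by
    push_cast; ring
  rw [h]
  refine (norm_add_le _ _).trans ?_
  rw [norm_mul, norm_mul, Complex.norm_exp_ofReal_mul_I, mul_one, Complex.norm_real,
    Complex.norm_of_nonneg hb, Real.norm_eq_abs]
  gcongr
  exact Complex.norm_exp_ofReal_mul_I_sub_exp_ofReal_mul_I_le α β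

theorem abs_sub_sub_deriv_mul_le {f : ℝ → ℝ} (hf : ContDiff ℝ 2 f) {C : ℝ}
    (hC : ∀ s, |deriv (deriv f) s| ≤ C) (t τ : ℝ) :
    |f (t + τ) - f t - deriv f t * τ| ≤ C * τ ^ 2 / 2 := by
  rcases eq_or_ne τ 0 with rfl | hτ
  · simp
  have hne : t ≠ t + τ := by simpa using hτ
  obtain ⟨s, -, hs⟩ := taylor_mean_remainder_lagrange_iteratedDeriv hne hf.contDiffOn
  have hlin : taylorWithinEval f 1 (Set.uIcc t (t + τ)) t (t + τ) = f t + deriv f t * τ := by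
    rw [taylorWithinEval_succ, taylor_within_zero_eval, iteratedDerivWithin_one,
      (hf.differentiable (by norm_num) t).derivWithin
        ((uniqueDiffOn_uIcc hne) t Set.left_mem_uIcc)]
    simp [mul_comm]
  rw [sub_sub, ← hlin, hs, iteratedDeriv_succ, iteratedDeriv_one]
  calc _ = |deriv (deriv f) s| * τ ^ 2 / 2 := by norm_num [abs_mul, abs_div]
    _ ≤ C * τ ^ 2 / 2 := by gcongr; exact hC s

section Window

variable {g : ℝ → ℝ} {c : ℝ}

theorem integral_dilation_mul_exp (hc : 0 < c) (ξ : ℝ) :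
    ∫ τ : ℝ, ((c⁻¹ * g (τ / c) : ℝ) : ℂ) * Complex.exp (-(2 * (π : ℂ) * ξ * τ) * Complex.I) =
      hatg g (c * ξ) := by
  have h : ∀ τ : ℝ, ((c⁻¹ * g (τ / c) : ℝ) : ℂ) *
      Complex.exp (-(2 * (π : ℂ) * ξ * τ) * Complex.I) = (c⁻¹ : ℂ) *
        (fun u : ℝ => (g u : ℂ) * Complex.exp (-(2 * (π : ℂ) * (c * ξ) * u) * Complex.I))
          (τ / c) := by
    intro τ
    have hc' : (c : ℂ) ≠ 0 := by exact_mod_cast hc.ne'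
    push_cast
    field_simp
  simp_rw [h]
  rw [integral_const_mul, Measure.integral_comp_div
    (fun u : ℝ => (g u : ℂ) * Complex.exp (-(2 * (π : ℂ) * (c * ξ) * u) * Complex.I)),
    abs_of_pos hc, Complex.real_smul,
    ← mul_assoc, inv_mul_cancel₀ (Complex.ofReal_ne_zero.mpr hc.ne'), one_mul, hatg,
    Complex.ofReal_mul]

theorem abs_pow_mul_dilation_eq (hc : 0 < c) (n : ℕ) (τ : ℝ) :
    |τ| ^ n * (c⁻¹ * |g (τ / c)|) = c ^ n * c⁻¹ * (|τ / c| ^ n * |g (τ / c)|) := by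
  rw [abs_div, abs_of_pos hc, div_pow]
  field_simp

theorem integral_abs_pow_mul_dilation (hc : 0 < c) (n : ℕ) :
    ∫ τ : ℝ, |τ| ^ n * (c⁻¹ * |g (τ / c)|) = c ^ n * momentI g n := by
  simp_rw [abs_pow_mul_dilation_eq hc]
  rw [integral_const_mul, Measure.integral_comp_div (fun u => |u| ^ n * |g u|), abs_of_pos hc,
    smul_eq_mul, momentI]
  field_simp

theorem MeasureTheory.Integrable.abs_pow_mul_dilation {n : ℕ}
    (hg : Integrable fun τ : ℝ => τ ^ n * g τ) (hc : 0 < c) :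
    Integrable fun τ : ℝ => |τ| ^ n * (c⁻¹ * |g (τ / c)|) := by
  simp_rw [abs_pow_mul_dilation_eq hc]
  refine Integrable.const_mul ?_ _
  simpa only [norm_mul, norm_pow, Real.norm_eq_abs] using hg.norm.comp_div hc.ne'

theorem moment_weight_eq (ε1 ε2 w τ : ℝ) :
    (ε1 * |τ| + π * ε2 * τ ^ 2) * w = ε1 * (|τ| ^ 1 * w) + π * ε2 * (|τ| ^ 2 * w) := by
  rw [pow_one, sq_abs]; ring

theorem integrable_moment_weight (ε1 ε2 : ℝ) (hg1 : Integrable fun τ : ℝ => τ * g τ)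
    (hg2 : Integrable fun τ : ℝ => τ ^ 2 * g τ) (hc : 0 < c) :
    Integrable fun τ : ℝ => (ε1 * |τ| + π * ε2 * τ ^ 2) * (c⁻¹ * |g (τ / c)|) := by
  simp_rw [moment_weight_eq]
  have hg1' : Integrable fun τ : ℝ => τ ^ 1 * g τ := by simpa only [pow_one] using hg1
  exact ((hg1'.abs_pow_mul_dilation hc).const_mul ε1).add
    ((hg2.abs_pow_mul_dilation hc).const_mul (π * ε2))

theorem integral_moment_weight (ε1 ε2 : ℝ) (hg1 : Integrable fun τ : ℝ => τ * g τ)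
    (hg2 : Integrable fun τ : ℝ => τ ^ 2 * g τ) (hc : 0 < c) :
    ∫ τ : ℝ, (ε1 * |τ| + π * ε2 * τ ^ 2) * (c⁻¹ * |g (τ / c)|) =
      ε1 * momentI g 1 * c + π * ε2 * momentI g 2 * c ^ 2 := by
  have hg1' : Integrable fun τ : ℝ => τ ^ 1 * g τ := by simpa only [pow_one] using hg1
  simp_rw [moment_weight_eq]
  rw [integral_add ((hg1'.abs_pow_mul_dilation hc).const_mul ε1)
      ((hg2.abs_pow_mul_dilation hc).const_mul (π * ε2)), integral_const_mul, integral_const_mul,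
    integral_abs_pow_mul_dilation hc, integral_abs_pow_mul_dilation hc]
  ring

theorem norm_mul_dilation_mul_exp {F : ℝ → ℂ} (hc : 0 < c) (η τ : ℝ) :
    ‖F τ * ((c⁻¹ * g (τ / c) : ℝ) : ℂ) * Complex.exp (-(2 * (π : ℂ) * η * τ) * Complex.I)‖ =
      ‖F τ‖ * (c⁻¹ * |g (τ / c)|) := by
  have hE : -(2 * (π : ℂ) * η * τ) * Complex.I = ((-(2 * π * η * τ) : ℝ) : ℂ) * Complex.I := by
    push_cast; ring
  rw [norm_mul, norm_mul, hE, Complex.norm_exp_ofReal_mul_I, mul_one, Complex.norm_real,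
    Real.norm_eq_abs, abs_mul, abs_of_pos (inv_pos.mpr hc)]

theorem aestronglyMeasurable_mul_dilation_mul_exp {F : ℝ → ℂ} (hF : AEStronglyMeasurable F)
    (hg : Integrable g) (hc : 0 < c) (η : ℝ) :
    AEStronglyMeasurable fun τ : ℝ =>
      F τ * ((c⁻¹ * g (τ / c) : ℝ) : ℂ) * Complex.exp (-(2 * (π : ℂ) * η * τ) * Complex.I) :=
  (hF.mul ((hg.comp_div hc.ne').const_mul c⁻¹).ofReal.aestronglyMeasurable).mul
    (by fun_prop : Continuous _).aestronglyMeasurable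

theorem integrable_mul_dilation_mul_exp_of_norm_le {F : ℝ → ℂ} {a ε1 ε2 : ℝ}
    (hF : AEStronglyMeasurable F) (hFle : ∀ τ, ‖F τ‖ ≤ a * (ε1 * |τ| + π * ε2 * τ ^ 2))
    (hg : Integrable g) (hg1 : Integrable fun τ : ℝ => τ * g τ)
    (hg2 : Integrable fun τ : ℝ => τ ^ 2 * g τ) (hc : 0 < c) (η : ℝ) :
    Integrable fun τ : ℝ =>
      F τ * ((c⁻¹ * g (τ / c) : ℝ) : ℂ) * Complex.exp (-(2 * (π : ℂ) * η * τ) * Complex.I) := by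
  refine ((integrable_moment_weight ε1 ε2 hg1 hg2 hc).const_mul a).mono'
    (aestronglyMeasurable_mul_dilation_mul_exp hF hg hc η) (ae_of_all _ fun τ => ?_)
  rw [norm_mul_dilation_mul_exp hc, ← mul_assoc a]
  exact mul_le_mul_of_nonneg_right (hFle τ) (by positivity)

theorem norm_integral_mul_dilation_mul_exp_le {F : ℝ → ℂ} {a ε1 ε2 : ℝ}
    (hFle : ∀ τ, ‖F τ‖ ≤ a * (ε1 * |τ| + π * ε2 * τ ^ 2))
    (hg1 : Integrable fun τ : ℝ => τ * g τ) (hg2 : Integrable fun τ : ℝ => τ ^ 2 * g τ)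
    (hc : 0 < c) (η : ℝ) :
    ‖∫ τ : ℝ,
        F τ * ((c⁻¹ * g (τ / c) : ℝ) : ℂ) * Complex.exp (-(2 * (π : ℂ) * η * τ) * Complex.I)‖ ≤
      a * (ε1 * momentI g 1 * c + π * ε2 * momentI g 2 * c ^ 2) := by
  calc _ ≤ ∫ τ : ℝ, a * ((ε1 * |τ| + π * ε2 * τ ^ 2) * (c⁻¹ * |g (τ / c)|)) :=
        norm_integral_le_of_norm_le ((integrable_moment_weight ε1 ε2 hg1 hg2 hc).const_mul a)
          (ae_of_all _ fun τ => by
            rw [norm_mul_dilation_mul_exp hc, ← mul_assoc a]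
            exact mul_le_mul_of_nonneg_right (hFle τ) (by positivity))
    _ = _ := by rw [integral_const_mul, integral_moment_weight ε1 ε2 hg1 hg2 hc]

theorem integral_mul_exp_mul_dilation_mul_exp (z : ℂ) (hc : 0 < c) (ω η : ℝ) :
    ∫ τ : ℝ, z * Complex.exp (((2 * π * ω * τ : ℝ) : ℂ) * Complex.I) *
        ((c⁻¹ * g (τ / c) : ℝ) : ℂ) * Complex.exp (-(2 * (π : ℂ) * η * τ) * Complex.I) =
      z * hatg g (c * (η - ω)) := by
  have h : ∀ τ : ℝ, z * Complex.exp (((2 * π * ω * τ : ℝ) : ℂ) * Complex.I) *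
      ((c⁻¹ * g (τ / c) : ℝ) : ℂ) * Complex.exp (-(2 * (π : ℂ) * η * τ) * Complex.I) =
      z * (((c⁻¹ * g (τ / c) : ℝ) : ℂ) *
        Complex.exp (-(2 * (π : ℂ) * ((η - ω : ℝ) : ℂ) * τ) * Complex.I)) := by
    intro τ
    have hexp : Complex.exp (((2 * π * ω * τ : ℝ) : ℂ) * Complex.I) *
        Complex.exp (-(2 * (π : ℂ) * η * τ) * Complex.I) =
        Complex.exp (-(2 * (π : ℂ) * ((η - ω : ℝ) : ℂ) * τ) * Complex.I) := by
      rw [← Complex.exp_add]; push_cast; ring_nf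
    rw [← hexp]
    ring
  simp_rw [h]
  rw [integral_const_mul, integral_dilation_mul_exp hc]

theorem integrable_mul_exp_mul_dilation_mul_exp (z : ℂ) (hg : Integrable g) (hc : 0 < c)
    (ω η : ℝ) :
    Integrable fun τ : ℝ => z * Complex.exp (((2 * π * ω * τ : ℝ) : ℂ) * Complex.I) *
        ((c⁻¹ * g (τ / c) : ℝ) : ℂ) * Complex.exp (-(2 * (π : ℂ) * η * τ) * Complex.I) := by
  refine (((hg.comp_div hc.ne').norm.const_mul c⁻¹).const_mul ‖z‖).mono'
    (aestronglyMeasurable_mul_dilation_mul_exp (by fun_prop) hg hc η) (ae_of_all _ fun τ => ?_)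
  rw [norm_mul_dilation_mul_exp (F := fun τ : ℝ =>
      z * Complex.exp (((2 * π * ω * τ : ℝ) : ℂ) * Complex.I)) hc, norm_mul,
    Complex.norm_exp_ofReal_mul_I, mul_one, Real.norm_eq_abs]

variable {f : ℝ → ℂ} {z : ℂ} {ω η : ℝ}

theorem integrable_mul_dilation_mul_exp_of_sub
    (hrem : Integrable fun τ : ℝ =>
      (f τ - z * Complex.exp (((2 * π * ω * τ : ℝ) : ℂ) * Complex.I)) *
        ((c⁻¹ * g (τ / c) : ℝ) : ℂ) * Complex.exp (-(2 * (π : ℂ) * η * τ) * Complex.I))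
    (hg : Integrable g) (hc : 0 < c) :
    Integrable fun τ : ℝ =>
      f τ * ((c⁻¹ * g (τ / c) : ℝ) : ℂ) * Complex.exp (-(2 * (π : ℂ) * η * τ) * Complex.I) :=
  (hrem.add (integrable_mul_exp_mul_dilation_mul_exp z hg hc ω η)).congr
    (ae_of_all _ fun τ => by simp only [Pi.add_apply]; ring)

theorem integral_mul_dilation_mul_exp_eq_add
    (hrem : Integrable fun τ : ℝ =>
      (f τ - z * Complex.exp (((2 * π * ω * τ : ℝ) : ℂ) * Complex.I)) *
        ((c⁻¹ * g (τ / c) : ℝ) : ℂ) * Complex.exp (-(2 * (π : ℂ) * η * τ) * Complex.I))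
    (hg : Integrable g) (hc : 0 < c) :
    ∫ τ : ℝ, f τ * ((c⁻¹ * g (τ / c) : ℝ) : ℂ) * Complex.exp (-(2 * (π : ℂ) * η * τ) * Complex.I) =
      z * hatg g (c * (η - ω)) +
        ∫ τ : ℝ, (f τ - z * Complex.exp (((2 * π * ω * τ : ℝ) : ℂ) * Complex.I)) *
          ((c⁻¹ * g (τ / c) : ℝ) : ℂ) * Complex.exp (-(2 * (π : ℂ) * η * τ) * Complex.I) := by
  rw [← integral_mul_exp_mul_dilation_mul_exp z hc ω η,
    ← integral_add (integrable_mul_exp_mul_dilation_mul_exp z hg hc ω η) hrem]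
  congr 1 with τ
  ring

end Window

section Component

variable (A φ : ℕ → ℝ → ℝ) (k : ℕ) {g : ℝ → ℝ} {σ : ℝ → ℝ} {t τ ε1 ε2 : ℝ}

theorem norm_xcomp_add_sub_linearization_le (hφ : ContDiff ℝ 2 (φ k))
    (hφ'' : ∀ s, |deriv (deriv (φ k)) s| ≤ ε2) (hA : 0 ≤ A k t)
    (hAlip : |A k (t + τ) - A k t| ≤ ε1 * |τ| * A k t) :
    ‖xcomp A φ k (t + τ) -
        xcomp A φ k t * Complex.exp (((2 * π * deriv (φ k) t * τ : ℝ) : ℂ) * Complex.I)‖ ≤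
      A k t * (ε1 * |τ| + π * ε2 * τ ^ 2) := by
  have hphase : xcomp A φ k t * Complex.exp (((2 * π * deriv (φ k) t * τ : ℝ) : ℂ) * Complex.I) =
      (A k t : ℂ) * Complex.exp (((2 * π * (φ k t + deriv (φ k) t * τ) : ℝ) : ℂ) * Complex.I) := by
    rw [xcomp, mul_assoc, ← Complex.exp_add]; push_cast; ring_nf
  have hxcomp : xcomp A φ k (t + τ) =
      (A k (t + τ) : ℂ) * Complex.exp (((2 * π * φ k (t + τ) : ℝ) : ℂ) * Complex.I) := by
    rw [xcomp]; push_cast; rfl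
  rw [hphase, hxcomp]
  refine (Complex.norm_ofReal_mul_exp_sub_ofReal_mul_exp_le hA).trans ?_
  have hφ' : |2 * π * φ k (t + τ) - 2 * π * (φ k t + deriv (φ k) t * τ)| ≤
      2 * π * (ε2 * τ ^ 2 / 2) := by
    rw [← mul_sub, abs_mul, abs_of_pos (by positivity), ← sub_sub]
    gcongr
    exact abs_sub_sub_deriv_mul_le hφ hφ'' t τ
  linarith [mul_le_mul_of_nonneg_left hφ' hA]

theorem integrable_xcomp_remainder (hAc : Continuous (A k)) (hφ : ContDiff ℝ 2 (φ k))
    (hφ'' : ∀ s, |deriv (deriv (φ k)) s| ≤ ε2) (hA : 0 ≤ A k t)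
    (hAlip : ∀ τ, |A k (t + τ) - A k t| ≤ ε1 * |τ| * A k t) (hg : Integrable g)
    (hg1 : Integrable fun τ : ℝ => τ * g τ) (hg2 : Integrable fun τ : ℝ => τ ^ 2 * g τ)
    (hσ : 0 < σ t) (η : ℝ) :
    Integrable fun τ : ℝ =>
      (xcomp A φ k (t + τ) -
          xcomp A φ k t * Complex.exp (((2 * π * deriv (φ k) t * τ : ℝ) : ℂ) * Complex.I)) *
        (((σ t)⁻¹ * g (τ / σ t) : ℝ) : ℂ) * Complex.exp (-(2 * (π : ℂ) * η * τ) * Complex.I) := by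
  have hφc := hφ.continuous
  refine integrable_mul_dilation_mul_exp_of_norm_le ?_
    (fun τ => norm_xcomp_add_sub_linearization_le A φ k hφ hφ'' hA (hAlip τ)) hg hg1 hg2 hσ η
  unfold xcomp
  exact Continuous.aestronglyMeasurable (by fun_prop)

theorem norm_integral_xcomp_remainder_le (hφ : ContDiff ℝ 2 (φ k))
    (hφ'' : ∀ s, |deriv (deriv (φ k)) s| ≤ ε2) (hA : 0 ≤ A k t)
    (hAlip : ∀ τ, |A k (t + τ) - A k t| ≤ ε1 * |τ| * A k t)
    (hg1 : Integrable fun τ : ℝ => τ * g τ) (hg2 : Integrable fun τ : ℝ => τ ^ 2 * g τ)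
    (hσ : 0 < σ t) (η : ℝ) :
    ‖∫ τ : ℝ,
        (xcomp A φ k (t + τ) -
            xcomp A φ k t * Complex.exp (((2 * π * deriv (φ k) t * τ : ℝ) : ℂ) * Complex.I)) *
          (((σ t)⁻¹ * g (τ / σ t) : ℝ) : ℂ) * Complex.exp (-(2 * (π : ℂ) * η * τ) * Complex.I)‖ ≤
      A k t * lam0 g σ ε1 ε2 t :=
  norm_integral_mul_dilation_mul_exp_le
    (fun τ => norm_xcomp_add_sub_linearization_le A φ k hφ hφ'' hA (hAlip τ)) hg1 hg2 hσ η

end Component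

theorem sinusoidal_remainder_bound_general (K : ℕ) (A φ : ℕ → ℝ → ℝ) (ε1 ε2 : ℝ) (x : ℝ → ℂ)
    (g : ℝ → ℝ) (σ : ℝ → ℝ) (t : ℝ)
    (hε2 : 0 < ε2)
    (hAreg : ∀ k ≤ K, ContDiff ℝ 1 (A k))
    (hφreg : ∀ k ≤ K, ContDiff ℝ 2 (φ k))
    (hφ0 : ∀ s, φ 0 s = 0)
    (hApos : ∀ k ≤ K, ∀ s, 0 < A k s)
    (hAlip : ∀ k ≤ K, ∀ s τ, |A k (s + τ) - A k s| ≤ ε1 * |τ| * A k s)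
    (hφ'' : ∀ k, 1 ≤ k → k ≤ K → ∀ s, |deriv (deriv (φ k)) s| ≤ ε2)
    (hx : ∀ s, x s = ∑ k ∈ Finset.range (K + 1), xcomp A φ k s)
    (hgint : Integrable g)
    (hgI1 : Integrable fun τ : ℝ => τ * g τ)
    (hgI2 : Integrable fun τ : ℝ => τ ^ 2 * g τ)
    (hσ : ∀ s, 0 < σ s)
    :
    ∀ η : ℝ,
      (aSTFT x g σ t η =
        (∑ k ∈ Finset.range (K + 1),
          xcomp A φ k t * hatg g (σ t * (η - deriv (φ k) t))) +
        (∑ k ∈ Finset.range (K + 1), ∫ τ : ℝ,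
          (xcomp A φ k (t + τ) -
              xcomp A φ k t * Complex.exp (((2 * π * deriv (φ k) t * τ : ℝ) : ℂ) * Complex.I)) *
            (((σ t)⁻¹ * g (τ / σ t) : ℝ) : ℂ) *
            Complex.exp (-(2 * (π : ℂ) * η * τ) * Complex.I))) ∧
      ‖∑ k ∈ Finset.range (K + 1), ∫ τ : ℝ,
          (xcomp A φ k (t + τ) -
              xcomp A φ k t * Complex.exp (((2 * π * deriv (φ k) t * τ : ℝ) : ℂ) * Complex.I)) *
            (((σ t)⁻¹ * g (τ / σ t) : ℝ) : ℂ) *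
            Complex.exp (-(2 * (π : ℂ) * η * τ) * Complex.I)‖ ≤
        Msum K A t * lam0 g σ ε1 ε2 t := by
  intro η
  have hK {k : ℕ} (hk : k ∈ Finset.range (K + 1)) : k ≤ K := Finset.mem_range_succ_iff.mp hk
  have hφ''_all {k : ℕ} (hk : k ∈ Finset.range (K + 1)) (s : ℝ) :
      |deriv (deriv (φ k)) s| ≤ ε2 := by
    rcases Nat.eq_zero_or_pos k with rfl | hk1
    · simpa [funext hφ0] using hε2.le
    · exact hφ'' k hk1 (hK hk) s
  have hrem {k : ℕ} (hk : k ∈ Finset.range (K + 1)) :=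
    integrable_xcomp_remainder A φ k (hAreg k (hK hk)).continuous (hφreg k (hK hk))
      (hφ''_all hk) (hApos k (hK hk) t).le (hAlip k (hK hk) t) hgint hgI1 hgI2 (hσ t) η
  refine ⟨?_, ?_⟩
  · rw [aSTFT, ← Finset.sum_add_distrib]
    simp_rw [hx, Finset.sum_mul]
    rw [integral_finsetSum _ fun k hk =>
      integrable_mul_dilation_mul_exp_of_sub (hrem hk) hgint (hσ t)]
    exact Finset.sum_congr rfl fun k hk =>
      integral_mul_dilation_mul_exp_eq_add (hrem hk) hgint (hσ t)
  · refine (norm_sum_le _ _).trans ?_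
    rw [Msum, Finset.sum_mul]
    exact Finset.sum_le_sum fun k hk =>
      norm_integral_xcomp_remainder_le A φ k (hφreg k (hK hk)) (hφ''_all hk)
        (hApos k (hK hk) t).le (hAlip k (hK hk) t) hgI1 hgI2 (hσ t) η

theorem sinusoidal_remainder_bound (K : ℕ) (A φ : ℕ → ℝ → ℝ) (ε1 ε2 : ℝ) (x : ℝ → ℂ)
    (g : ℝ → ℝ) (σ : ℝ → ℝ) (t : ℝ)
    (hε1 : 0 < ε1) (hε2 : 0 < ε2)
    (hAreg : ∀ k ≤ K, ContDiff ℝ 1 (A k))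
    (hAbdd : ∀ k ≤ K, ∃ C, ∀ s, |A k s| ≤ C)
    (hφreg : ∀ k ≤ K, ContDiff ℝ 2 (φ k))
    (hφ0 : ∀ s, φ 0 s = 0)
    (hApos : ∀ k ≤ K, ∀ s, 0 < A k s)
    (hφ'pos : ∀ k, 1 ≤ k → k ≤ K → ∃ c > 0, ∀ s, c ≤ deriv (φ k) s)
    (hφ'bdd : ∀ k, 1 ≤ k → k ≤ K → ∃ C, ∀ s, deriv (φ k) s ≤ C)
    (hfreq : ∃ d > 0, ∀ k, 2 ≤ k → k ≤ K → ∀ s, d ≤ deriv (φ k) s - deriv (φ (k - 1)) s)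
    (hAlip : ∀ k ≤ K, ∀ s τ, |A k (s + τ) - A k s| ≤ ε1 * |τ| * A k s)
    (hφ'' : ∀ k, 1 ≤ k → k ≤ K → ∀ s, |deriv (deriv (φ k)) s| ≤ ε2)
    (hx : ∀ s, x s = ∑ k ∈ Finset.range (K + 1), xcomp A φ k s)
    (hgint : Integrable g)
    (hgL2 : MemLp g 2 (volume : Measure ℝ))
    (hgI1 : Integrable fun τ : ℝ => τ * g τ)
    (hgI2 : Integrable fun τ : ℝ => τ ^ 2 * g τ)
    (hgnorm : (∫ τ : ℝ, g τ) = 1)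
    (hσ : ∀ s, 0 < σ s)
    :
    ∀ η : ℝ,
      (aSTFT x g σ t η =
        (∑ k ∈ Finset.range (K + 1),
          xcomp A φ k t * hatg g (σ t * (η - deriv (φ k) t))) +
        (∑ k ∈ Finset.range (K + 1), ∫ τ : ℝ,
          (xcomp A φ k (t + τ) -
              xcomp A φ k t * Complex.exp (((2 * π * deriv (φ k) t * τ : ℝ) : ℂ) * Complex.I)) *
            (((σ t)⁻¹ * g (τ / σ t) : ℝ) : ℂ) *
            Complex.exp (-(2 * (π : ℂ) * η * τ) * Complex.I))) ∧
      ‖∑ k ∈ Finset.range (K + 1), ∫ τ : ℝ,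
          (xcomp A φ k (t + τ) -
              xcomp A φ k t * Complex.exp (((2 * π * deriv (φ k) t * τ : ℝ) : ℂ) * Complex.I)) *
            (((σ t)⁻¹ * g (τ / σ t) : ℝ) : ℂ) *
            Complex.exp (-(2 * (π : ℂ) * η * τ) * Complex.I)‖ ≤
        Msum K A t * lam0 g σ ε1 ε2 t :=
  sinusoidal_remainder_bound_general K A φ ε1 ε2 x g σ t hε2 hAreg hφreg hφ0 hApos hAlip hφ'' hx
    hgint hgI1 hgI2 hσ
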